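/- arXiv:0905.2419 — 3 statements merged into one kernel-verified Lean document; each statement's English description precedes it below -/
import Mathlib

section
/- Let a₁, …, a_m be positive integers with greatest common divisor d and least common multiple g. If M is a non-negative integer such that d divides M and M ≥ m·g, then there exist non-negative integers b₁, …, b_m with Σ_k a_k·b_k = M. -/
/-- Bezout identity over a finset, in `ℤ`. -/
theorem knapsack_aux_bezout {ι : Type*} [DecidableEq ι] (s : Finset ι) (f : ι → ℤ) :
    ∃ c : ι → ℤ, ∑ k ∈ s, f k * c k = s.gcd f := by
  classical
  induction s using Finset.induction with
  | empty => exact ⟨0, by simp⟩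
  | @insert i s hi ih =>
      obtain ⟨c, hc⟩ := ih
      refine ⟨Function.update (fun k => c k * Int.gcdB (f i) (s.gcd f)) i
        (Int.gcdA (f i) (s.gcd f)), ?_⟩
      rw [Finset.sum_insert hi, Finset.gcd_insert]
      have h1 : ∑ k ∈ s, f k * Function.update
          (fun k => c k * Int.gcdB (f i) (s.gcd f)) i (Int.gcdA (f i) (s.gcd f)) k
          = ∑ k ∈ s, f k * (c k * Int.gcdB (f i) (s.gcd f)) := by
        refine Finset.sum_congr rfl fun k hk => ?_
        rw [Function.update_of_ne (by rintro rfl; exact hi hk)]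
      rw [h1, Function.update_self]
      have h2 : ∑ k ∈ s, f k * (c k * Int.gcdB (f i) (s.gcd f))
          = (∑ k ∈ s, f k * c k) * Int.gcdB (f i) (s.gcd f) := by
        rw [Finset.sum_mul]; exact Finset.sum_congr rfl fun k _ => (mul_assoc _ _ _).symm
      rw [h2, hc, ← Int.coe_gcd]
      linarith [Int.gcd_eq_gcd_ab (f i) (s.gcd f)]

/-- Casting a finset gcd from `ℕ` to `ℤ`. -/
theorem knapsack_aux_gcd_cast {ι : Type*} [DecidableEq ι] (s : Finset ι) (f : ι → ℕ) :
    ((s.gcd f : ℕ) : ℤ) = s.gcd (fun k => (f k : ℤ)) := by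
  classical
  induction s using Finset.induction with
  | empty => simp
  | @insert i s hi ih =>
      rw [Finset.gcd_insert, Finset.gcd_insert, ← ih, ← Int.coe_gcd,
        Int.gcd_natCast_natCast]
      rfl

/-- Frobenius-type representability: if `a₁, …, a_m` are positive integers with
gcd `d` and lcm `g`, then every multiple `M` of `d` with `M ≥ m·g` is a
non-negative integer combination of the `a_k`. -/
theorem knapsack_representable (m : ℕ) (a : Fin m → ℕ) (ha : ∀ k, 0 < a k)
    (d g M : ℕ) (hd : d = Finset.univ.gcd a) (hg : g = Finset.univ.lcm a)
    (hdvd : d ∣ M) (hM : m * g ≤ M) :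
    ∃ b : Fin m → ℕ, ∑ k, a k * b k = M := by
  classical
  rcases Nat.eq_zero_or_pos m with hm | hm
  · subst hm
    have : d = 0 := by simp [hd]
    rw [this] at hdvd
    refine ⟨fun _ => 0, ?_⟩
    simp [zero_dvd_iff.mp hdvd]
  set i0 : Fin m := ⟨0, hm⟩ with hi0
  -- each a k divides g, g is positive
  have hag : ∀ k, a k ∣ g := fun k => hg ▸ Finset.dvd_lcm (Finset.mem_univ k)
  have hgpos : 0 < g := by
    rcases Nat.eq_zero_or_pos g with h0 | h0
    · exfalso
      rw [hg, Finset.lcm_eq_zero_iff] at h0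
      obtain ⟨k, -, hk⟩ := Set.mem_image _ _ _ |>.mp h0
      exact (ha k).ne' hk
    · exact h0
  -- Bezout
  obtain ⟨c, hc⟩ := knapsack_aux_bezout Finset.univ (fun k : Fin m => (a k : ℤ))
  rw [← knapsack_aux_gcd_cast, ← hd] at hc
  obtain ⟨t, ht⟩ := hdvd
  set x : Fin m → ℤ := fun k => c k * ((t : ℕ) : ℤ) with hxdef
  have hx : ∑ k, (a k : ℤ) * x k = (M : ℤ) := by
    have : ∑ k, (a k : ℤ) * x k = (∑ k, (a k : ℤ) * c k) * (t : ℤ) := by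
      rw [Finset.sum_mul]; exact Finset.sum_congr rfl fun k _ => (mul_assoc _ _ _).symm
    rw [this, hc, ht]; push_cast; ring
  -- quotients
  set gk : Fin m → ℕ := fun k => g / a k with hgkdef
  have hgk_mul : ∀ k, a k * gk k = g := fun k => Nat.mul_div_cancel' (hag k)
  have hgk_pos : ∀ k, 0 < gk k := fun k =>
    Nat.div_pos (Nat.le_of_dvd hgpos (hag k)) (ha k)
  set r : Fin m → ℤ := fun k => x k % (gk k : ℤ) with hrdef
  have hr_nonneg : ∀ k, 0 ≤ r k := fun k =>
    Int.emod_nonneg _ (by exact_mod_cast (hgk_pos k).ne')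
  have hr_lt : ∀ k, r k < (gk k : ℤ) := fun k =>
    Int.emod_lt_of_pos _ (by exact_mod_cast hgk_pos k)
  set S : ℤ := ∑ k ∈ Finset.univ.erase i0, (a k : ℤ) * r k with hSdef
  have hsplit : (M : ℤ) - S = (a i0 : ℤ) * x i0 +
      ∑ k ∈ Finset.univ.erase i0, ((a k : ℤ) * x k - (a k : ℤ) * r k) := by
    rw [Finset.sum_sub_distrib, ← hx,
      ← Finset.add_sum_erase _ _ (Finset.mem_univ i0)]
    ring
  have hdvd0 : (a i0 : ℤ) ∣ (M : ℤ) - S := by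
    rw [hsplit]
    refine dvd_add (Dvd.intro _ rfl) (Finset.dvd_sum fun k _ => ?_)
    have h1 : (a k : ℤ) * x k - (a k : ℤ) * r k = (g : ℤ) * (x k / (gk k : ℤ)) := by
      have hdm := Int.mul_ediv_add_emod (x k) (gk k : ℤ)
      have hg' : ((a k : ℕ) : ℤ) * (gk k : ℤ) = (g : ℤ) := by
        exact_mod_cast congrArg (Nat.cast : ℕ → ℤ) (hgk_mul k)
      have hrk : r k = x k % (gk k : ℤ) := rfl
      rw [hrk]
      linear_combination -(a k : ℤ) * hdm + (x k / (gk k : ℤ)) * hg'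
    rw [h1]
    exact Dvd.dvd.mul_right (by exact_mod_cast hag i0) _
  -- bound on S
  have hSle : S ≤ ((m : ℤ) - 1) * ((g : ℤ) - 1) := by
    have hcard : (Finset.univ.erase i0).card = m - 1 := by
      rw [Finset.card_erase_of_mem (Finset.mem_univ i0), Finset.card_univ,
        Fintype.card_fin]
    calc S ≤ ∑ _k ∈ Finset.univ.erase i0, ((g : ℤ) - 1) := by
          refine Finset.sum_le_sum fun k _ => ?_
          have h1 : (a k : ℤ) * r k ≤ (a k : ℤ) * ((gk k : ℤ) - 1) := by
            have := hr_lt k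
            have hak : (0 : ℤ) ≤ (a k : ℤ) := by positivity
            nlinarith [hr_nonneg k]
          have h2 : (a k : ℤ) * ((gk k : ℤ) - 1) = (g : ℤ) - (a k : ℤ) := by
            have hg' : (a k : ℤ) * (gk k : ℤ) = (g : ℤ) := by
              exact_mod_cast congrArg (Nat.cast : ℕ → ℤ) (hgk_mul k)
            linarith [hg']
          have h3 : (1 : ℤ) ≤ (a k : ℤ) := by exact_mod_cast ha k
          linarith
      _ = ((m : ℤ) - 1) * ((g : ℤ) - 1) := by
          rw [Finset.sum_const, hcard, nsmul_eq_mul]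
          congr 1
          have : (1 : ℕ) ≤ m := hm
          push_cast [Nat.cast_sub this]
          ring
  have hMS_pos : 0 < (M : ℤ) - S := by
    have hM' : ((m : ℤ)) * (g : ℤ) ≤ (M : ℤ) := by exact_mod_cast hM
    have hg1 : (1 : ℤ) ≤ (g : ℤ) := by exact_mod_cast hgpos
    have hm1 : (1 : ℤ) ≤ (m : ℤ) := by exact_mod_cast hm
    nlinarith
  obtain ⟨q, hq⟩ := hdvd0
  have hq_nonneg : 0 ≤ q := by
    by_contra h
    push_neg at h
    have : (a i0 : ℤ) * q ≤ 0 := by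
      have : (0:ℤ) < (a i0 : ℤ) := by exact_mod_cast ha i0
      nlinarith
    omega
  refine ⟨fun k => if k = i0 then q.toNat else (r k).toNat, ?_⟩
  have key : ((∑ k, a k * (if k = i0 then q.toNat else (r k).toNat) : ℕ) : ℤ) = (M : ℤ) := by
    push_cast
    rw [← Finset.add_sum_erase _ _ (Finset.mem_univ i0)]
    have h1 : ∑ k ∈ Finset.univ.erase i0,
        (a k : ℤ) * (if k = i0 then (q.toNat : ℤ) else ((r k).toNat : ℤ)) = S := by
      refine Finset.sum_congr rfl fun k hk => ?_
      have hk' : k ≠ i0 := Finset.ne_of_mem_erase hk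
      rw [if_neg hk', Int.toNat_of_nonneg (hr_nonneg k)]
    rw [h1, if_pos rfl, Int.toNat_of_nonneg hq_nonneg]
    linarith [hq]
  exact_mod_cast key
end

section
/- For a natural number x ≥ 2, define n₀(x) = 2·⌈log₂ x⌉ and N₀(x) = x · 2^{n₀(x)}. Then N₀(x)^{2/3} ≤ 2^{n₀(x)} (as real numbers), and consequently N₀(x) + N₀(x)^{2/3} ≤ N₀(x+1). -/
/-- For `x ≥ 2`, with `n₀(x) = 2⌈log₂ x⌉` and `N₀(x) = x·2^{n₀(x)}`, one has
`N₀(x)^{2/3} ≤ 2^{n₀(x)}`, and consequently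
`N₀(x) + N₀(x)^{2/3} ≤ N₀(x+1)`. -/
theorem prime_interval_bound (x : ℕ) (hx : 2 ≤ x) :
    ((x * 2 ^ (2 * Nat.clog 2 x) : ℕ) : ℝ) ^ ((2 : ℝ) / 3)
        ≤ (2 : ℝ) ^ (2 * Nat.clog 2 x) ∧
    ((x * 2 ^ (2 * Nat.clog 2 x) : ℕ) : ℝ)
        + ((x * 2 ^ (2 * Nat.clog 2 x) : ℕ) : ℝ) ^ ((2 : ℝ) / 3)
      ≤ (((x + 1) * 2 ^ (2 * Nat.clog 2 (x + 1)) : ℕ) : ℝ) := by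
  set k := Nat.clog 2 x with hk
  have hx2 : (x : ℝ) ≤ 2 ^ k := by
    exact_mod_cast Nat.le_pow_clog (by norm_num) x
  have hN : ((x * 2 ^ (2 * k) : ℕ) : ℝ) ≤ 2 ^ (3 * k) := by
    push_cast
    calc (x : ℝ) * 2 ^ (2 * k) ≤ 2 ^ k * 2 ^ (2 * k) :=
          mul_le_mul_of_nonneg_right hx2 (by positivity)
      _ = 2 ^ (3 * k) := by rw [← pow_add]; ring_nf
  have hNpos : (0 : ℝ) ≤ ((x * 2 ^ (2 * k) : ℕ) : ℝ) := by positivity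
  have h1 : ((x * 2 ^ (2 * k) : ℕ) : ℝ) ^ ((2 : ℝ) / 3) ≤ 2 ^ (2 * k) := by
    have h := Real.rpow_le_rpow hNpos hN (by norm_num : (0:ℝ) ≤ 2/3)
    calc ((x * 2 ^ (2 * k) : ℕ) : ℝ) ^ ((2 : ℝ) / 3)
        ≤ ((2 : ℝ) ^ (3 * k)) ^ ((2 : ℝ) / 3) := h
      _ = 2 ^ (2 * k) := by
          rw [← Real.rpow_natCast 2 (3 * k), ← Real.rpow_natCast 2 (2 * k),
            ← Real.rpow_mul (by norm_num)]
          congr 1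
          push_cast
          ring
  refine ⟨h1, ?_⟩
  have hmono : k ≤ Nat.clog 2 (x + 1) := Nat.clog_mono_right _ (Nat.le_succ x)
  calc ((x * 2 ^ (2 * k) : ℕ) : ℝ) + ((x * 2 ^ (2 * k) : ℕ) : ℝ) ^ ((2 : ℝ) / 3)
      ≤ ((x * 2 ^ (2 * k) : ℕ) : ℝ) + 2 ^ (2 * k) := by linarith
    _ = (((x + 1) * 2 ^ (2 * k) : ℕ) : ℝ) := by push_cast; ring
    _ ≤ (((x + 1) * 2 ^ (2 * Nat.clog 2 (x + 1)) : ℕ) : ℝ) := by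
        push_cast
        have : (2:ℝ) ^ (2 * k) ≤ 2 ^ (2 * Nat.clog 2 (x + 1)) :=
          pow_le_pow_right₀ one_le_two (by omega)
        nlinarith [this, hx2]
end

section
/- Let T be a finite tile set with symmetric weight functions w_H, w_V : T × T → ℤ (i.e., w_H(a,b) = w_H(b,a) and w_V(a,b) = w_V(b,a)). Let f : ZMod N × ZMod N → T be a toroidal tiling of total cost c (sum of w_V over all vertically adjacent pairs plus w_H over all horizontally adjacent pairs, cyclically). For any row index a, the tiling of the (N+2) × N torus obtained by duplicating rows a and a+1 (inserting copies of row a+1 then row a after row a+1, in reflected order) has total cost exactly c + w(R_a) + w(R_{a+1}) + 2·w(R_a, R_{a+1}), where w(R_b) is the internal horizontal cost of row b and w(R_b, R_{b+1}) is the vertical cost between rows b and b+1. -/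
/-!
The duplicated torus has rows `R 0, …, R a, R (a+1), R a, R (a+1), R (a+2), …, R (N-1)`. Rows `a`
and `a+1` occur twice, which adds `w(R_a) + w(R_{a+1})` to the horizontal cost. Every vertical
interface except the one from the first copy of `R (a+1)` to the inserted `R a` is an interface
`(R i, R (i+1))` of the original torus, each occurring once except `(R a, R (a+1))`, which occurs
twice; the exceptional interface `(R (a+1), R a)` costs `w(R_a, R_{a+1})` as well, by symmetry of
`w_V`.
-/

instance (n : ℕ) : NeZero (n + 2) := ⟨by omega⟩

/-- Internal horizontal cost of a single (cyclic) row. -/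
def rowCost {T : Type*} (wH : T → T → ℤ) (N : ℕ) [NeZero N] (row : ZMod N → T) : ℤ :=
  ∑ j : ZMod N, wH (row j) (row (j + 1))

/-- Vertical cost between two (cyclic) rows. -/
def interCost {T : Type*} (wV : T → T → ℤ) (N : ℕ) [NeZero N] (r₁ r₂ : ZMod N → T) : ℤ :=
  ∑ j : ZMod N, wV (r₁ j) (r₂ j)

/-- Total cost of an `M × N` toroidal tiling (rows indexed by `ZMod M`, columns
by `ZMod N`, cyclic adjacency in both directions). -/
def torusCost {T : Type*} (wH wV : T → T → ℤ) (M N : ℕ) [NeZero M] [NeZero N]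
    (f : ZMod M → ZMod N → T) : ℤ :=
  ∑ i : ZMod M, rowCost wH N (f i) + ∑ i : ZMod M, interCost wV N (f i) (f (i + 1))

theorem ZMod.sum_val_eq_sum_range {β : Type*} [AddCommMonoid β] (M : ℕ) [NeZero M] (f : ℕ → β) :
    ∑ i : ZMod M, f i.val = ∑ k ∈ Finset.range M, f k := by
  obtain ⟨n, rfl⟩ := Nat.exists_eq_succ_of_ne_zero (NeZero.ne M)
  exact Fin.sum_univ_eq_sum_range f (n + 1)

theorem ZMod.sum_eq_sum_range {β : Type*} [AddCommMonoid β] (M : ℕ) [NeZero M] (F : ZMod M → β) :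
    ∑ i : ZMod M, F i = ∑ k ∈ Finset.range M, F k := by
  simpa only [ZMod.natCast_zmod_val] using ZMod.sum_val_eq_sum_range M (fun k => F k)

theorem Fintype.sum_adjacent_add_eq_of_semiconj_ne {ι X β : Type*} [Fintype ι] [DecidableEq ι]
    [AddCommMonoid β] (s : ι → ι) (σ : X → X) (φ : ι → X) (p : ι) (hφ : ∀ k ≠ p, φ (s k) = σ (φ k))
    (G : X → X → β) :
    ∑ k, G (φ k) (φ (s k)) + G (φ p) (σ (φ p)) = ∑ k, G (φ k) (σ (φ k)) + G (φ p) (φ (s p)) := by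
  rw [← Finset.add_sum_erase _ _ (Finset.mem_univ p),
    ← Finset.add_sum_erase _ _ (Finset.mem_univ p),
    Finset.sum_congr rfl fun k hk => by rw [hφ k (Finset.ne_of_mem_erase hk)]]
  abel

/-- Row `k` of the duplicated torus is row `dupIndex v k` of the original one, `v = a.val`. -/
def dupIndex (v k : ℕ) : ℕ := if k ≤ v + 1 then k else k - 2

theorem sum_range_dupIndex {β : Type*} [AddCommMonoid β] (f : ℕ → β) {v N : ℕ} (hv : v < N) :
    ∑ k ∈ Finset.range (N + 2), f (dupIndex v k) = ∑ j ∈ Finset.range N, f j + f v + f (v + 1) := by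
  induction N, hv using Nat.le_induction with
  | base =>
    have hle : ∀ k ∈ Finset.range (v + 1), f (dupIndex v k) = f k := fun k hk => by
      rw [dupIndex, if_pos (by simp only [Finset.mem_range] at hk; omega)]
    rw [Finset.sum_range_succ, Finset.sum_range_succ, Finset.sum_congr rfl hle, dupIndex, dupIndex,
      if_pos le_rfl, if_neg (by omega), Nat.add_sub_cancel, add_right_comm]
  | succ N hN ih =>
    rw [Finset.sum_range_succ, ih, Finset.sum_range_succ, dupIndex, if_neg (by omega)]
    simp only [Nat.add_sub_cancel]
    abel

theorem dupIndex_succ {v m : ℕ} (hm : m ≠ v + 1) : dupIndex v (m + 1) = dupIndex v m + 1 := by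
  unfold dupIndex
  split_ifs <;> omega

def dupRow {N : ℕ} (a : ZMod N) (k : ZMod (N + 2)) : ZMod N := (dupIndex a.val k.val : ZMod N)

section
variable {N : ℕ} [NeZero N] (a : ZMod N)

omit [NeZero N] in
theorem dupRow_natCast {m : ℕ} (hm : m < N + 2) : dupRow a m = (dupIndex a.val m : ZMod N) := by
  rw [dupRow, ZMod.val_cast_of_lt hm]

theorem sum_dupRow {β : Type*} [AddCommMonoid β] (F : ZMod N → β) :
    ∑ k, F (dupRow a k) = ∑ i, F i + F a + F (a + 1) := by
  calc ∑ k, F (dupRow a k)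
      = ∑ j ∈ Finset.range N, F j + F (a.val : ℕ) + F (a.val + 1 : ℕ) :=
        (ZMod.sum_val_eq_sum_range (N + 2) _).trans (sum_range_dupIndex (fun j => F j) a.val_lt)
    _ = ∑ i, F i + F a + F (a + 1) := by
        rw [← ZMod.sum_eq_sum_range, Nat.cast_add_one, ZMod.natCast_zmod_val]

theorem dupRow_add_one {k : ZMod (N + 2)} (hk : k ≠ (a.val + 1 : ℕ)) :
    dupRow a (k + 1) = dupRow a k + 1 := by
  obtain ⟨m, hm, rfl⟩ : ∃ m < N + 2, (m : ZMod (N + 2)) = k := ⟨k.val, k.val_lt, k.natCast_zmod_val⟩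
  have hmv : m ≠ a.val + 1 := fun h => hk (h ▸ rfl)
  rcases Nat.lt_or_ge (m + 1) (N + 2) with hlt | hge
  · rw [← Nat.cast_add_one, dupRow_natCast a hlt, dupRow_natCast a hm, dupIndex_succ hmv,
      Nat.cast_add_one]
  · have hmN : m = N + 1 := by omega
    have hwrap : (m : ZMod (N + 2)) + 1 = ((0 : ℕ) : ZMod (N + 2)) := by
      rw [hmN, Nat.cast_zero, ← Nat.cast_add_one, ZMod.natCast_self]
    have hN : dupIndex a.val m + 1 = N := by
      have := a.val_lt
      unfold dupIndex
      split_ifs <;> omega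
    rw [hwrap, dupRow_natCast a (by omega), dupRow_natCast a hm, ← Nat.cast_add_one, hN,
      ZMod.natCast_self, dupIndex, if_pos (Nat.zero_le _), Nat.cast_zero]

theorem dupRow_inserted : dupRow a (a.val + 1 : ℕ) = a + 1 := by
  rw [dupRow_natCast a (by have := a.val_lt; omega), dupIndex, if_pos le_rfl, Nat.cast_add_one,
    ZMod.natCast_zmod_val]

theorem dupRow_inserted_add_one : dupRow a ((a.val + 1 : ℕ) + 1) = a := by
  rw [← Nat.cast_add_one, dupRow_natCast a (by have := a.val_lt; omega), dupIndex,
    if_neg (by omega), show a.val + 1 + 1 - 2 = a.val by omega, ZMod.natCast_zmod_val]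

end

theorem interCost_comm {T : Type*} {wV : T → T → ℤ} (hV : ∀ a b : T, wV a b = wV b a)
    (N : ℕ) [NeZero N] (r₁ r₂ : ZMod N → T) : interCost wV N r₁ r₂ = interCost wV N r₂ r₁ :=
  Finset.sum_congr rfl fun _ _ => hV _ _

theorem duplicate_rows_cost_general {T : Type*} (wH wV : T → T → ℤ)
    (hV : ∀ a b : T, wV a b = wV b a)
    (N : ℕ) [NeZero N] (R : ZMod N → ZMod N → T) (a : ZMod N) :
    torusCost wH wV (N + 2) N
      (fun k : ZMod (N + 2) =>
        R (if k.val ≤ a.val + 1 then ((k.val : ℕ) : ZMod N)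
           else ((k.val - 2 : ℕ) : ZMod N)))
      = torusCost wH wV N N R
        + rowCost wH N (R a) + rowCost wH N (R (a + 1))
        + 2 * interCost wV N (R a) (R (a + 1)) := by
  have hrows : (fun k : ZMod (N + 2) => R (if k.val ≤ a.val + 1 then ((k.val : ℕ) : ZMod N)
      else ((k.val - 2 : ℕ) : ZMod N))) = fun k => R (dupRow a k) := by
    funext k
    simp only [dupRow, dupIndex, Nat.cast_ite]
  have hinter := Fintype.sum_adjacent_add_eq_of_semiconj_ne (· + 1) (· + 1) (dupRow a)
    (a.val + 1 : ℕ) (fun k hk => dupRow_add_one a hk) fun i j => interCost wV N (R i) (R j)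
  rw [dupRow_inserted, dupRow_inserted_add_one,
    sum_dupRow a fun i => interCost wV N (R i) (R (i + 1)),
    interCost_comm hV N (R (a + 1)) (R a)] at hinter
  rw [hrows, torusCost, torusCost, sum_dupRow a fun i => rowCost wH N (R i)]
  linarith

/-- Duplicating the pair of adjacent rows `a, a+1` of an `N × N` toroidal
tiling with reflection-symmetric weights yields an `(N+2) × N` toroidal tiling
whose total cost is exactly
`c + w(R_a) + w(R_{a+1}) + 2·w(R_a, R_{a+1})`. -/
theorem duplicate_rows_cost {T : Type*} [Fintype T] (wH wV : T → T → ℤ)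
    (hH : ∀ a b : T, wH a b = wH b a) (hV : ∀ a b : T, wV a b = wV b a)
    (N : ℕ) [NeZero N] (R : ZMod N → ZMod N → T) (a : ZMod N) :
    torusCost wH wV (N + 2) N
      (fun k : ZMod (N + 2) =>
        R (if k.val ≤ a.val + 1 then ((k.val : ℕ) : ZMod N)
           else ((k.val - 2 : ℕ) : ZMod N)))
      = torusCost wH wV N N R
        + rowCost wH N (R a) + rowCost wH N (R (a + 1))
        + 2 * interCost wV N (R a) (R (a + 1)) :=
  duplicate_rows_cost_general wH wV hV N R a
end
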